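/- arXiv:2505.13630 — 11 statements merged into one kernel-verified Lean document; each statement's English description precedes it below -/
import Mathlib

section
/- Every finite directed graph has a quasi-kernel: an independent set K of vertices such that every vertex not in K is reachable from some vertex of K by a directed path of length at most 2. -/
private lemma quasi_aux {V : Type*} [DecidableEq V] (E : V → V → Prop)
    [DecidableRel E] (hloop : ∀ v, ¬ E v v) (S : Finset V) :
    ∃ K : Finset V, K ⊆ S ∧
      (∀ a ∈ K, ∀ b ∈ K, ¬ E a b) ∧
      (∀ v ∈ S, v ∉ K → ∃ u ∈ K, E u v ∨ ∃ w ∈ S, E u w ∧ E w v) := by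
  induction S using Finset.strongInduction with
  | _ S IH =>
    rcases S.eq_empty_or_nonempty with rfl | ⟨v, hv⟩
    · exact ⟨∅, by simp⟩
    · set T : Finset V := S \ (insert v (S.filter (fun x => E v x))) with hT
      have hTS : T ⊂ S := by
        refine Finset.ssubset_iff_of_subset (Finset.sdiff_subset) |>.mpr ?_
        exact ⟨v, hv, by simp [hT]⟩
      obtain ⟨Q, hQT, hQind, hQcov⟩ := IH T hTS
      have hvT : v ∉ T := by simp [hT]
      have hvQ : v ∉ Q := fun h => hvT (hQT h)
      have hTmem : ∀ x, x ∈ T ↔ x ∈ S ∧ x ≠ v ∧ ¬ E v x := by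
        intro x
        simp [hT, Finset.mem_sdiff, Finset.mem_insert, Finset.mem_filter]
        tauto
      by_cases hq : ∃ q ∈ Q, E q v
      · -- K = Q
        obtain ⟨q, hqQ, hqv⟩ := hq
        refine ⟨Q, fun x hx => (Finset.sdiff_subset (hQT hx)), hQind, ?_⟩
        intro x hxS hxQ
        by_cases hxT : x ∈ T
        · obtain ⟨u, huQ, hu⟩ := hQcov x hxT hxQ
          refine ⟨u, huQ, ?_⟩
          rcases hu with h | ⟨w, hwT, hw⟩
          · exact Or.inl h
          · exact Or.inr ⟨w, Finset.sdiff_subset hwT, hw⟩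
        · have := (hTmem x).not.mp hxT
          push_neg at this
          rcases eq_or_ne x v with rfl | hne
          · exact ⟨q, hqQ, Or.inl hqv⟩
          · have hvx : E v x := this hxS hne
            exact ⟨q, hqQ, Or.inr ⟨v, hv, hqv, hvx⟩⟩
      · -- K = insert v Q
        push_neg at hq
        refine ⟨insert v Q, ?_, ?_, ?_⟩
        · intro x hx
          rcases Finset.mem_insert.mp hx with rfl | hx
          · exact hv
          · exact Finset.sdiff_subset (hQT hx)
        · intro a ha b hb
          rcases Finset.mem_insert.mp ha with ha' | ha' <;>
            rcases Finset.mem_insert.mp hb with hb' | hb'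
          · rw [ha', hb']; exact hloop v
          · rw [ha']; exact ((hTmem b).mp (hQT hb')).2.2
          · rw [hb']; exact hq a ha'
          · exact hQind a ha' b hb'
        · intro x hxS hxK
          have hxv : x ≠ v := fun h => hxK (by simp [h])
          have hxQ : x ∉ Q := fun h => hxK (Finset.mem_insert_of_mem h)
          by_cases hxT : x ∈ T
          · obtain ⟨u, huQ, hu⟩ := hQcov x hxT hxQ
            refine ⟨u, Finset.mem_insert_of_mem huQ, ?_⟩
            rcases hu with h | ⟨w, hwT, hw⟩
            · exact Or.inl h
            · exact Or.inr ⟨w, Finset.sdiff_subset hwT, hw⟩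
          · have := (hTmem x).not.mp hxT
            push_neg at this
            exact ⟨v, Finset.mem_insert_self _ _, Or.inl (this hxS hxv)⟩

/-- Every finite directed graph (with no self-loops) has a quasi-kernel: an
independent set `K` such that every vertex outside `K` is reachable from some
vertex of `K` by a directed path of length at most 2. -/
theorem stmt1 {V : Type*} [Fintype V] (E : V → V → Prop) [DecidableRel E]
    (hloop : ∀ v, ¬ E v v) :
    ∃ K : Finset V,
      (∀ a ∈ K, ∀ b ∈ K, ¬ E a b) ∧
      (∀ v, v ∉ K → ∃ u ∈ K, E u v ∨ ∃ w, E u w ∧ E w v) := by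
  classical
  obtain ⟨K, -, hind, hcov⟩ := quasi_aux E hloop Finset.univ
  refine ⟨K, hind, fun v hv => ?_⟩
  obtain ⟨u, huK, hu⟩ := hcov v (Finset.mem_univ v) hv
  refine ⟨u, huK, ?_⟩
  rcases hu with h | ⟨w, -, hw⟩
  · exact Or.inl h
  · exact Or.inr ⟨w, hw⟩
end

section
/- Suppose (X, d) is a pseudometric space containing voters V and candidates C, where each voter v prefers candidate a to candidate b whenever d(v,a) < d(v,b). If a strict majority of voters prefers candidate j to candidate i, then the social cost of j is at most 3 times the social cost of i, where social cost of c is the sum over voters v of d(v,c). -/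
/-- In a pseudometric space containing voters and candidates, where voter `v`
prefers candidate `a` to `b` whenever `d(v,a) < d(v,b)`: if a strict majority of
voters prefers candidate `j` to candidate `i`, then the social cost of `j` is at
most 3 times the social cost of `i`. -/
theorem stmt2 {X V : Type*} [PseudoMetricSpace X] [Fintype V] [Nonempty V]
    (loc : V → X) (i j : X)
    (hmaj : ((Finset.univ.filter fun v : V => dist (loc v) j < dist (loc v) i).card : ℝ)
        > (Fintype.card V : ℝ) / 2) :
    ∑ v : V, dist (loc v) j ≤ 3 * ∑ v : V, dist (loc v) i := by
  classical
  set S := Finset.univ.filter fun v : V => dist (loc v) j < dist (loc v) i with hSdef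
  set D := dist i j with hD
  have hDnn : 0 ≤ D := dist_nonneg
  -- each voter in S gives D ≤ 2 * d(v,i)
  have hmem : ∀ v ∈ S, dist (loc v) j < dist (loc v) i := by
    intro v hv
    simpa [hSdef] using (Finset.mem_filter.mp hv).2
  have hDle : ∀ v ∈ S, D ≤ 2 * dist (loc v) i := by
    intro v hv
    have h1 : D ≤ dist i (loc v) + dist (loc v) j := dist_triangle i (loc v) j
    have h2 := (hmem v hv).le
    have : dist i (loc v) = dist (loc v) i := dist_comm _ _
    linarith
  -- card of complement
  have hcard : (Sᶜ.card : ℝ) ≤ (S.card : ℝ) := by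
    have h1 : (Sᶜ.card : ℝ) = (Fintype.card V : ℝ) - S.card := by
      have := Finset.card_compl S
      rw [this]
      have hle : S.card ≤ Fintype.card V := Finset.card_le_univ S
      push_cast [Nat.cast_sub hle]
      ring
    linarith
  -- split sums
  have hsplit : ∀ f : V → ℝ, ∑ v : V, f v = ∑ v ∈ S, f v + ∑ v ∈ Sᶜ, f v := by
    intro f
    exact (Finset.sum_add_sum_compl S f).symm
  have hnni : 0 ≤ ∑ v ∈ Sᶜ, dist (loc v) i :=
    Finset.sum_nonneg fun v _ => dist_nonneg
  have key1 : ∑ v ∈ S, dist (loc v) j ≤ ∑ v ∈ S, dist (loc v) i :=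
    Finset.sum_le_sum fun v hv => (hmem v hv).le
  have key2 : ∑ v ∈ Sᶜ, dist (loc v) j ≤ ∑ v ∈ Sᶜ, dist (loc v) i + (Sᶜ.card : ℝ) * D := by
    have : ∀ v ∈ Sᶜ, dist (loc v) j ≤ dist (loc v) i + D :=
      fun v _ => dist_triangle (loc v) i j
    calc ∑ v ∈ Sᶜ, dist (loc v) j ≤ ∑ v ∈ Sᶜ, (dist (loc v) i + D) :=
          Finset.sum_le_sum this
      _ = ∑ v ∈ Sᶜ, dist (loc v) i + (Sᶜ.card : ℝ) * D := by
          rw [Finset.sum_add_distrib, Finset.sum_const, nsmul_eq_mul]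
  have key3 : (S.card : ℝ) * D ≤ 2 * ∑ v ∈ S, dist (loc v) i := by
    calc (S.card : ℝ) * D = ∑ _v ∈ S, D := by rw [Finset.sum_const, nsmul_eq_mul]
      _ ≤ ∑ v ∈ S, 2 * dist (loc v) i := Finset.sum_le_sum hDle
      _ = 2 * ∑ v ∈ S, dist (loc v) i := by rw [Finset.mul_sum]
  have hcd : (Sᶜ.card : ℝ) * D ≤ (S.card : ℝ) * D :=
    mul_le_mul_of_nonneg_right hcard hDnn
  rw [hsplit (fun v => dist (loc v) j), hsplit (fun v => dist (loc v) i)]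
  linarith
end

section
/- In the metric voting setting, if for candidates j*, k, i* we have s_{j*≻k} ≥ θ and either k = i* or s_{k≻i*} ≥ θ for some θ ∈ (1/2, 1], then SC(j*) ≤ (4/θ − 3)·SC(i*). -/
/-!
Write `D = d(j*, i*)`, `S` for the voters preferring `j*` to `k` and `T` for those preferring `k`
to `i*` (all voters if `k = i*`). A voter in `S ∩ T` is no farther from `j*` than from `i*`, and
every voter is at most `D` farther, so `SC(j*) ≤ SC(i*) + |(S ∩ T)ᶜ| D`; since
`|S ∩ T| ≥ |S| + |T| - n`, also `θ |(S ∩ T)ᶜ| ≤ 2 (1 - θ) min(|S|, |T|)`.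
A voter `x` preferring `a` to `b` has `d(a, b) ≤ 2 d(x, b)`. Hence `D ≤ 2 d(v, i*)` on `S ∩ T`,
`D - d(k, i*) ≤ 2 d(v, i*)` on `S \ T` and `d(k, i*) ≤ 2 d(v, i*)` on `T \ S`. Charging
`min(|S \ T|, |T \ S|)` voters of each exclusive part makes the `d(k, i*)` terms cancel, and gives
`min(|S|, |T|) D ≤ 2 SC(i*)`.
-/

open Finset

section Metric

variable {α : Type*} [PseudoMetricSpace α]

theorem dist_le_two_mul_add_of_dist_le {x a b : α} (c : α) (h : dist x a ≤ dist x b) :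
    dist a c ≤ 2 * dist x c + dist b c := by
  linarith [dist_triangle a x c, dist_comm a x, dist_triangle_right x b c]

theorem dist_le_two_mul_of_dist_le {x a b : α} (h : dist x a ≤ dist x b) :
    dist a b ≤ 2 * dist x b := by
  simpa using dist_le_two_mul_add_of_dist_le b h

end Metric

theorem Finset.sum_le_sum_add_card_compl_mul {V : Type*} [Fintype V] [DecidableEq V]
    {f g : V → ℝ} (M : Finset V) (D : ℝ) (hM : ∀ v ∈ M, f v ≤ g v) (h : ∀ v, f v ≤ g v + D) :
    ∑ v, f v ≤ ∑ v, g v + #Mᶜ * D := by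
  rw [← sum_add_sum_compl M f, ← sum_add_sum_compl M g]
  have hcompl : ∑ v ∈ Mᶜ, f v ≤ ∑ v ∈ Mᶜ, g v + #Mᶜ * D := by
    simpa [sum_add_distrib] using sum_le_sum fun v (_ : v ∈ Mᶜ) ↦ h v
  linarith [sum_le_sum hM]

section TwoStep

variable {V α : Type*} [Fintype V] [DecidableEq V] [PseudoMetricSpace α]
  (x : V → α) {a b c : α} {S T : Finset V}

theorem card_min_mul_dist_le_two_mul_sum_dist (hS : ∀ v ∈ S, dist (x v) a ≤ dist (x v) b)
    (hT : ∀ v ∈ T, dist (x v) b ≤ dist (x v) c) :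
    (min #S #T : ℕ) * dist a c ≤ 2 * ∑ v, dist (x v) c := by
  have hboth : #(S ∩ T) • dist a c ≤ ∑ v ∈ S ∩ T, 2 * dist (x v) c :=
    card_nsmul_le_sum _ _ _ fun v hv ↦ by
      rw [mem_inter] at hv
      exact dist_le_two_mul_of_dist_le ((hS v hv.1).trans (hT v hv.2))
  have hSonly : #(S \ T) • (dist a c - dist b c) ≤ ∑ v ∈ S \ T, 2 * dist (x v) c :=
    card_nsmul_le_sum _ _ _ fun v hv ↦ by
      linarith [dist_le_two_mul_add_of_dist_le c (hS v (mem_sdiff.1 hv).1)]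
  have hTonly : #(T \ S) • dist b c ≤ ∑ v ∈ T \ S, 2 * dist (x v) c :=
    card_nsmul_le_sum _ _ _ fun v hv ↦ dist_le_two_mul_of_dist_le (hT v (mem_sdiff.1 hv).1)
  simp only [nsmul_eq_mul, ← mul_sum] at hboth hSonly hTonly
  have hsplit : ∑ v ∈ S ∩ T, dist (x v) c + ∑ v ∈ S \ T, dist (x v) c
      + ∑ v ∈ T \ S, dist (x v) c ≤ ∑ v, dist (x v) c := by
    rw [sum_inter_add_sum_sdiff, ← sum_union disjoint_sdiff, union_sdiff_self_eq_union]
    exact sum_le_univ_sum_of_nonneg fun v ↦ dist_nonneg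
  set μ : ℝ := min #(S \ T) #(T \ S)
  have hμS : μ * (dist a c - dist b c) ≤ 2 * ∑ v ∈ S \ T, dist (x v) c := by
    rcases le_total 0 (dist a c - dist b c) with hpos | hneg
    · exact (mul_le_mul_of_nonneg_right (min_le_left _ _) hpos).trans hSonly
    · exact (mul_nonpos_of_nonneg_of_nonpos (by positivity) hneg).trans (by positivity)
  have hμT : μ * dist b c ≤ 2 * ∑ v ∈ T \ S, dist (x v) c :=
    (mul_le_mul_of_nonneg_right (min_le_right _ _) dist_nonneg).trans hTonly
  rw [← card_inter_add_card_sdiff S T, ← card_inter_add_card_sdiff T S, inter_comm T S,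
    min_add_add_left, Nat.cast_add, Nat.cast_min]
  linarith

theorem mul_card_compl_inter_le {θ : ℝ} (hθ₀ : 0 ≤ θ)
    (hSθ : θ * Fintype.card V ≤ #S) (hTθ : θ * Fintype.card V ≤ #T) :
    θ * #(S ∩ T)ᶜ ≤ 2 * (1 - θ) * (min #S #T : ℕ) := by
  have hunion : (#S + #T : ℝ) ≤ Fintype.card V + #(S ∩ T) := by
    have := card_union_add_card_inter S T
    have := card_le_univ (S ∪ T)
    exact_mod_cast (by omega : #S + #T ≤ Fintype.card V + #(S ∩ T))
  rw [card_compl, Nat.cast_sub (card_le_univ _), Nat.cast_min]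
  have hminS := mul_le_mul_of_nonneg_left (min_le_left (#S : ℝ) #T) hθ₀
  have hminT := mul_le_mul_of_nonneg_left (min_le_right (#S : ℝ) #T) hθ₀
  linarith [le_min hSθ hTθ, mul_le_mul_of_nonneg_left hunion hθ₀]

theorem sum_dist_le_of_two_step (hS : ∀ v ∈ S, dist (x v) a ≤ dist (x v) b)
    (hT : ∀ v ∈ T, dist (x v) b ≤ dist (x v) c) {θ : ℝ} (hθ₀ : 0 < θ) (hθ₁ : θ ≤ 1)
    (hSθ : θ * Fintype.card V ≤ #S) (hTθ : θ * Fintype.card V ≤ #T) :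
    ∑ v, dist (x v) a ≤ (4 / θ - 3) * ∑ v, dist (x v) c := by
  have hsum := sum_le_sum_add_card_compl_mul (S ∩ T) (dist a c)
    (fun v hv ↦ (hS v (mem_inter.1 hv).1).trans (hT v (mem_inter.1 hv).2))
    (fun v ↦ dist_triangle_right (x v) a c)
  have hD := card_min_mul_dist_le_two_mul_sum_dist x hS hT
  have hcard := mul_card_compl_inter_le hθ₀.le hSθ hTθ
  have key : θ * ∑ v, dist (x v) a ≤ (4 - 3 * θ) * ∑ v, dist (x v) c := calc
    θ * ∑ v, dist (x v) a ≤ θ * ∑ v, dist (x v) c + θ * #(S ∩ T)ᶜ * dist a c := by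
      linarith [mul_le_mul_of_nonneg_left hsum hθ₀.le]
    _ ≤ θ * ∑ v, dist (x v) c + 2 * (1 - θ) * ((min #S #T : ℕ) * dist a c) := by
      rw [← mul_assoc]; gcongr
    _ ≤ θ * ∑ v, dist (x v) c + 2 * (1 - θ) * (2 * ∑ v, dist (x v) c) := by
      gcongr
    _ = (4 - 3 * θ) * ∑ v, dist (x v) c := by ring
  rw [show 4 / θ - 3 = (4 - 3 * θ) / θ by field_simp, div_mul_eq_mul_div, le_div_iff₀ hθ₀]
  linarith

end TwoStep

theorem stmt3_general {X V C : Type*} [PseudoMetricSpace X] [Fintype V]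
    (vloc : V → X) (cloc : C → X)
    (pref : V → C → C → Prop) [∀ v, DecidableRel (pref v)]
    (hirr : ∀ v a b, pref v a b → ¬ pref v b a)
    (hconsist : ∀ v a b, dist (vloc v) (cloc a) < dist (vloc v) (cloc b) → pref v a b)
    (s : C → C → ℝ)
    (hs : ∀ a b, s a b =
      ((Finset.univ.filter fun v => pref v a b).card : ℝ) / (Fintype.card V))
    (θ : ℝ) (hθ₁ : 1/2 < θ) (hθ₂ : θ ≤ 1)
    (jstar k istar : C)
    (h1 : s jstar k ≥ θ) (h2 : k = istar ∨ s k istar ≥ θ) :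
    ∑ v : V, dist (vloc v) (cloc jstar) ≤
      (4/θ - 3) * ∑ v : V, dist (vloc v) (cloc istar) := by
  classical
  have hθ₀ : 0 < θ := by linarith
  have hmajority : ∀ a b, s a b ≥ θ → θ * Fintype.card V ≤ #{v | pref v a b} := fun a b h ↦
    mul_le_of_le_div₀ (by positivity) (by positivity) (hs a b ▸ h)
  have hcloser : ∀ a b, ∀ v ∈ ({v | pref v a b} : Finset V),
      dist (vloc v) (cloc a) ≤ dist (vloc v) (cloc b) := fun a b v hv ↦
    le_of_not_gt fun hlt ↦ hirr v a b (mem_filter.1 hv).2 (hconsist v b a hlt)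
  rcases h2 with rfl | h2
  · exact sum_dist_le_of_two_step vloc (hcloser jstar k) (T := univ) (fun _ _ ↦ le_rfl) hθ₀ hθ₂
      (hmajority jstar k h1) (by simpa using mul_le_of_le_one_left (by positivity) hθ₂)
  · exact sum_dist_le_of_two_step vloc (hcloser jstar k) (hcloser k istar) hθ₀ hθ₂
      (hmajority jstar k h1) (hmajority k istar h2)

/-- Metric voting (Corollary "two-step"): voters and candidates lie in a
pseudometric space, each voter has a strict total order on candidates consistent
with distances. If `s_{j*≻k} ≥ θ` and (`k = i*` or `s_{k≻i*} ≥ θ`) for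
`θ ∈ (1/2, 1]`, then `SC(j*) ≤ (4/θ − 3)·SC(i*)`. -/
theorem stmt3 {X V C : Type*} [PseudoMetricSpace X] [Fintype V] [Nonempty V] [Fintype C]
    (vloc : V → X) (cloc : C → X)
    (pref : V → C → C → Prop) [∀ v, DecidableRel (pref v)]
    (htrans : ∀ v, Transitive (pref v))
    (hirr : ∀ v a b, pref v a b → ¬ pref v b a)
    (htotal : ∀ v (a b : C), a ≠ b → pref v a b ∨ pref v b a)
    (hconsist : ∀ v a b, dist (vloc v) (cloc a) < dist (vloc v) (cloc b) → pref v a b)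
    (s : C → C → ℝ)
    (hs : ∀ a b, s a b =
      ((Finset.univ.filter fun v => pref v a b).card : ℝ) / (Fintype.card V))
    (θ : ℝ) (hθ₁ : 1/2 < θ) (hθ₂ : θ ≤ 1)
    (jstar k istar : C)
    (h1 : s jstar k ≥ θ) (h2 : k = istar ∨ s k istar ≥ θ) :
    ∑ v : V, dist (vloc v) (cloc jstar) ≤
      (4/θ - 3) * ∑ v : V, dist (vloc v) (cloc istar) :=
  stmt3_general vloc cloc pref hirr hconsist s hs θ hθ₁ hθ₂ jstar k istar h1 h2
end

section
/- Let k be a positive integer and let D_v, A_v be probability density functions (or distributions) on [0,1]-valued random variables indexed by v in a probability space (V, μ), such that ∫_v (∫ D_v^k dA_v) dμ ≤ 1/(k+1) and for every v, ∫ A_v^k dA_v = 1/(k+1). Then ∫_v (∫ D_v dA_v^k) dμ = ∫_v (∫ k · D_v · A_v^{k−1} dA_v) dμ ≤ k/(k+1). -/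
/-!
Instead of Hölder and Jensen, use Young's inequality `k d a^(k-1) ≤ d^k + (k-1) a^k` for
`d, a ≥ 0` (weighted AM–GM with weights `1/k` and `(k-1)/k`) pointwise. Integrating against
`ν v` and using `∫ A_v^k dν_v = 1/(k+1)` gives
`∫ k D_v A_v^(k-1) dν_v ≤ ∫ D_v^k dν_v + (k-1)/(k+1)`, and integrating over `v` gives
`1/(k+1) + (k-1)/(k+1) = k/(k+1)`.
-/

open MeasureTheory

theorem natCast_mul_mul_pow_sub_one_le (k : ℕ) {a b : ℝ} (ha : 0 ≤ a) (hb : 0 ≤ b) :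
    k * a * b ^ (k - 1) ≤ a ^ k + (k - 1) * b ^ k := by
  rcases k with _ | n
  · -- both sides vanish: `(0 : ℝ) - 1 = -1`, whereas `0 - 1 = 0` in `ℕ`
    simp
  have hn : (0 : ℝ) < n + 1 := by positivity
  have amgm := Real.geom_mean_le_arith_mean2_weighted (w₁ := 1 / (n + 1)) (w₂ := n / (n + 1))
    (p₁ := a ^ (n + 1)) (p₂ := b ^ (n + 1)) (by positivity) (by positivity) (by positivity)
    (by positivity) (by field_simp; ring)
  have root_a : (a ^ (n + 1)) ^ (1 / (n + 1 : ℝ)) = a := by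
    rw [← Real.rpow_natCast, ← Real.rpow_mul ha]
    push_cast
    rw [mul_one_div_cancel hn.ne', Real.rpow_one]
  have root_b : (b ^ (n + 1)) ^ (n / (n + 1 : ℝ)) = b ^ n := by
    rw [← Real.rpow_natCast, ← Real.rpow_mul hb, ← Real.rpow_natCast]
    push_cast
    rw [mul_div_cancel₀ _ hn.ne']
  rw [root_a, root_b] at amgm
  push_cast
  simp only [add_tsub_cancel_right]
  calc (n + 1) * a * b ^ n = (n + 1) * (a * b ^ n) := by ring
    _ ≤ (n + 1) * (1 / (n + 1) * a ^ (n + 1) + n / (n + 1) * b ^ (n + 1)) := by gcongr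
    _ = a ^ (n + 1) + n * b ^ (n + 1) := by field_simp

theorem integrable_of_mem_unitInterval {α : Type*} [MeasurableSpace α] {ν : Measure α}
    [IsFiniteMeasure ν] {f : α → ℝ} (hf : Measurable f) (hf01 : ∀ x, f x ∈ unitInterval) :
    Integrable f ν :=
  .of_bound hf.aestronglyMeasurable 1 <| ae_of_all _ fun x => by
    rw [Real.norm_of_nonneg (hf01 x).1]; exact (hf01 x).2

theorem integral_natCast_mul_mul_pow_sub_one_le {α : Type*} [MeasurableSpace α] {ν : Measure α}
    [IsFiniteMeasure ν] (k : ℕ) {f g : α → ℝ} (hf : Measurable f) (hg : Measurable g)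
    (hf01 : ∀ x, f x ∈ unitInterval) (hg01 : ∀ x, g x ∈ unitInterval) :
    ∫ x, k * f x * g x ^ (k - 1) ∂ν ≤ ∫ x, f x ^ k ∂ν + (k - 1) * ∫ x, g x ^ k ∂ν := by
  have hfk := integrable_of_mem_unitInterval (ν := ν) (hf.pow_const k)
    fun x => pow_mem (S := unitInterval.submonoid) (hf01 x) k
  have hgk := integrable_of_mem_unitInterval (ν := ν) (hg.pow_const k)
    fun x => pow_mem (S := unitInterval.submonoid) (hg01 x) k
  have hfg := integrable_of_mem_unitInterval (ν := ν) (hf.mul (hg.pow_const (k - 1)))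
    fun x => unitInterval.mul_mem (hf01 x) (pow_mem (S := unitInterval.submonoid) (hg01 x) _)
  rw [← integral_const_mul, ← integral_add hfk (hgk.const_mul _)]
  simp_rw [mul_assoc]
  exact integral_mono (hfg.const_mul _) (hfk.add (hgk.const_mul _)) fun x =>
    by simpa only [mul_assoc] using
      natCast_mul_mul_pow_sub_one_le k (hf01 x).1 (hg01 x).1

theorem stmt4_general {V : Type*} [MeasurableSpace V] (μ : Measure V) [IsProbabilityMeasure μ]
    (k : ℕ)
    (ν : V → Measure ℝ) (hν : ∀ v, IsProbabilityMeasure (ν v))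
    (D A : V → ℝ → ℝ)
    (hD01 : ∀ v x, D v x ∈ Set.Icc (0:ℝ) 1)
    (hA01 : ∀ v x, A v x ∈ Set.Icc (0:ℝ) 1)
    (hDm : ∀ v, Measurable (D v)) (hAm : ∀ v, Measurable (A v))
    (h1 : ∫ v, (∫ x, (D v x)^k ∂(ν v)) ∂μ ≤ 1/((k:ℝ)+1))
    (h2 : ∀ v, ∫ x, (A v x)^k ∂(ν v) = 1/((k:ℝ)+1))
    (hint : Integrable (fun v => ∫ x, (k:ℝ) * D v x * (A v x)^(k-1) ∂(ν v)) μ)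
    (hint1 : Integrable (fun v => ∫ x, (D v x)^k ∂(ν v)) μ) :
    ∫ v, (∫ x, (k:ℝ) * D v x * (A v x)^(k-1) ∂(ν v)) ∂μ ≤ (k:ℝ)/((k:ℝ)+1) := by
  have inner_le (v : V) : ∫ x, (k:ℝ) * D v x * (A v x)^(k-1) ∂(ν v) ≤
      ∫ x, (D v x)^k ∂(ν v) + (k - 1) * (1 / (k + 1)) := by
    rw [← h2 v]
    exact integral_natCast_mul_mul_pow_sub_one_le k (hDm v) (hAm v) (hD01 v) (hA01 v)
  calc ∫ v, (∫ x, (k:ℝ) * D v x * (A v x)^(k-1) ∂(ν v)) ∂μ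
      ≤ ∫ v, (∫ x, (D v x)^k ∂(ν v) + (k - 1) * (1 / (k + 1))) ∂μ :=
        integral_mono hint (hint1.add (integrable_const _)) inner_le
    _ = ∫ v, (∫ x, (D v x)^k ∂(ν v)) ∂μ + (k - 1) * (1 / (k + 1)) := by
        rw [integral_add hint1 (integrable_const _), integral_const, probReal_univ, one_smul]
    _ ≤ 1 / (k + 1) + (k - 1) * (1 / (k + 1)) := by gcongr
    _ = k / (k + 1) := by ring

/-- The analytic core of "stable k-lotteries are stable defensive k-lotteries":
given `∫_v ∫ D_v^k dA_v dμ ≤ 1/(k+1)` and `∫ A_v^k dA_v = 1/(k+1)` for all `v`,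
we have `∫_v ∫ k·D_v·A_v^{k−1} dA_v dμ ≤ k/(k+1)` (Hölder + Jensen). Here `ν v`
is the distribution `A_v`, and `A v` its CDF-type function. -/
theorem stmt4 {V : Type*} [MeasurableSpace V] (μ : Measure V) [IsProbabilityMeasure μ]
    (k : ℕ) (hk : 1 ≤ k)
    (ν : V → Measure ℝ) (hν : ∀ v, IsProbabilityMeasure (ν v))
    (D A : V → ℝ → ℝ)
    (hD01 : ∀ v x, D v x ∈ Set.Icc (0:ℝ) 1)
    (hA01 : ∀ v x, A v x ∈ Set.Icc (0:ℝ) 1)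
    (hDm : ∀ v, Measurable (D v)) (hAm : ∀ v, Measurable (A v))
    (h1 : ∫ v, (∫ x, (D v x)^k ∂(ν v)) ∂μ ≤ 1/((k:ℝ)+1))
    (h2 : ∀ v, ∫ x, (A v x)^k ∂(ν v) = 1/((k:ℝ)+1))
    (hint : Integrable (fun v => ∫ x, (k:ℝ) * D v x * (A v x)^(k-1) ∂(ν v)) μ)
    (hint1 : Integrable (fun v => ∫ x, (D v x)^k ∂(ν v)) μ) :
    ∫ v, (∫ x, (k:ℝ) * D v x * (A v x)^(k-1) ∂(ν v)) ∂μ ≤ (k:ℝ)/((k:ℝ)+1) :=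
  stmt4_general μ k ν hν D A hD01 hA01 hDm hAm h1 h2 hint hint1
end

section
/- Suppose there is a cyclic permutation τ of the candidate set C such that s_{i≻j} = s_{τ(i)≻τ(j)} for all candidates i, j. Then for every pair of candidates j*, i* and every partition C = I ⊔ J with i* ∈ I and j* ∈ J, there exist i ∈ I and j ∈ J with s_{i≻j*} ≤ s_{j≻i*}. -/
/-- Cyclic symmetry: if `τ` is a cyclic permutation of the candidates (every
candidate is reachable from every other by iterating `τ`) with
`s_{i≻j} = s_{τ(i)≻τ(j)}` for all `i, j`, then for every pair `j*, i*` and every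
partition `C = I ⊔ J` with `i* ∈ I`, `j* ∈ J`, there are `i ∈ I` and `j ∈ J`
with `s_{i≻j*} ≤ s_{j≻i*}`. -/
theorem stmt8 {C : Type*} [Fintype C] [DecidableEq C]
    (s : C → C → ℝ) (τ : C → C)
    (hcyc : ∀ a b : C, ∃ t : ℕ, τ^[t] a = b)
    (hsym : ∀ i j, s i j = s (τ i) (τ j))
    (jstar istar : C) (I J : Finset C)
    (hUnion : I ∪ J = Finset.univ) (hdisj : Disjoint I J)
    (hi : istar ∈ I) (hj : jstar ∈ J) :
    ∃ i ∈ I, ∃ j ∈ J, s i jstar ≤ s j istar := by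
  by_contra hcon
  push_neg at hcon
  -- hcon : ∀ i ∈ I, ∀ j ∈ J, s j istar < s i jstar
  obtain ⟨t, ht⟩ := hcyc jstar istar
  obtain ⟨n', hn'⟩ := hcyc (τ jstar) jstar
  have hnj : τ^[n' + 1] jstar = jstar := by
    rw [Function.iterate_succ_apply]; exact hn'
  have hmem : ∀ x : C, x ∈ I ∨ x ∈ J := by
    intro x
    have hx := Finset.mem_univ x
    rw [← hUnion, Finset.mem_union] at hx
    exact hx
  have hsymm : ∀ (m : ℕ) (a b : C), s a b = s (τ^[m] a) (τ^[m] b) := by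
    intro m
    induction m with
    | zero => simp
    | succ k ih =>
        intro a b
        rw [ih a b, Function.iterate_succ_apply', Function.iterate_succ_apply',
          ← hsym]
  -- t = 0 would mean istar = jstar, contradicting disjointness
  have ht0 : t ≠ 0 := by
    intro h
    subst h
    simp only [Function.iterate_zero_apply] at ht
    exact Finset.disjoint_left.mp hdisj hi (ht ▸ hj)
  -- key step: the orbit shifted by t stays in I
  have key : ∀ x : ℕ, τ^[x] jstar ∈ I → τ^[x + t] jstar ∈ I := by
    intro x hx
    rcases hmem (τ^[x + t] jstar) with h | h
    · exact h
    · exfalso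
      have h1 := hcon _ hx _ h
      have h2 : s (τ^[x] jstar) jstar = s (τ^[x + t] jstar) istar := by
        rw [hsymm t (τ^[x] jstar) jstar, ← Function.iterate_add_apply, ht,
          Nat.add_comm t x]
      linarith
  -- hence all multiples (k+1)*t land in I
  have hmul : ∀ k : ℕ, τ^[(k + 1) * t] jstar ∈ I := by
    intro k
    induction k with
    | zero => simpa [one_mul, ht] using hi
    | succ m ih =>
        have : (m + 1 + 1) * t = (m + 1) * t + t := by ring
        rw [this]
        exact key _ ih
  -- periodicity: multiples of n'+1 fix jstar
  have hper : ∀ k : ℕ, τ^[k * (n' + 1)] jstar = jstar := by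
    intro k
    induction k with
    | zero => simp
    | succ m ih =>
        have : (m + 1) * (n' + 1) = m * (n' + 1) + (n' + 1) := by ring
        rw [this, Function.iterate_add_apply, hnj, ih]
  -- now combine: τ^[(n'+1)*t] jstar = jstar ∈ I, contradiction
  obtain ⟨t', rfl⟩ : ∃ t', t = t' + 1 := ⟨t - 1, (Nat.succ_pred_eq_of_ne_zero ht0).symm⟩
  have h1 : τ^[(n' + 1) * (t' + 1)] jstar ∈ I := by
    have := hmul n'
    have he : (n' + 1) * (t' + 1) = (n' + 1) * (t' + 1) := rfl
    exact this
  have h2 : τ^[(n' + 1) * (t' + 1)] jstar = jstar := by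
    rw [Nat.mul_comm]; exact hper (t' + 1)
  rw [h2] at h1
  exact Finset.disjoint_left.mp hdisj h1 hj
end

section
/- Fix real numbers α ≥ β > 1/2. In any finite election (voters with strict rankings over candidates C), there exists a candidate j* ∈ C that is (α, β)-unblanketed: for every i* ≠ j*, there exists a candidate k such that (k = i* or s_{k≻i*} ≥ α), and either s_{k≻j*} ≤ β, or (s_{k≻j*} ≤ α and there exists ℓ ∉ {k, j*} with s_{k≻ℓ} ≤ β ≤ s_{j*≻ℓ}). -/
/-!
Suppose every candidate `j` is blanketed by some `b j`. Since the candidates are finite, `b` has a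
periodic orbit `y, b y, b² y, …`. Fix `y` on it. Walking backwards along the orbit from the
candidate that `y` blankets, `y` keeps satisfying (I) and (II) against the next candidate as long
as its share against the current one exceeds `α`. It cannot get all the way back to `y` itself,
because `s y y = 0 < β`. So it stops at an orbit element `z` with `β < s y z ≤ α`, and (II) then
makes the set of candidates that `z` beats with share `≥ β` a proper subset of the one for `y`
(here `β > 1/2` rules out `y` itself). The size of that set therefore has no minimum on the orbit,
which is absurd.
-/

open Finset Function

theorem Function.exists_isPeriodicPt_of_finite {α : Type*} [Finite α] [Nonempty α] (f : α → α) :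
    ∃ n, 0 < n ∧ ∃ x, IsPeriodicPt f n x := by
  obtain ⟨m, m', hne, heq⟩ :=
    Finite.exists_ne_map_eq_of_infinite fun t : ℕ => f^[t] (Classical.arbitrary α)
  wlog hlt : m < m' generalizing m m'
  · exact this m' m hne.symm heq.symm (by omega)
  refine ⟨m' - m, by omega, f^[m] (Classical.arbitrary α), ?_⟩
  rw [IsPeriodicPt, IsFixedPt, ← iterate_add_apply, Nat.sub_add_cancel hlt.le]
  exact heq.symm

section Election

variable {V C : Type*} [Fintype V] (pref : V → C → C → Prop) [∀ v, DecidableRel (pref v)]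

theorem card_filter_pref_self (hirr : ∀ v a b, pref v a b → ¬ pref v b a) (a : C) :
    (univ.filter fun v => pref v a a).card = 0 := by
  simpa using fun v h => hirr v a a h h

theorem card_filter_pref_add_card_filter_pref (hirr : ∀ v a b, pref v a b → ¬ pref v b a)
    (htotal : ∀ v (a b : C), a ≠ b → pref v a b ∨ pref v b a) {a b : C} (hab : a ≠ b) :
    (univ.filter fun v => pref v a b).card + (univ.filter fun v => pref v b a).card =
      Fintype.card V := by
  have hba : (univ.filter fun v => pref v b a) = univ.filter fun v => ¬ pref v a b := by
    ext v
    simp only [mem_filter, mem_univ, true_and]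
    exact ⟨hirr v b a, (htotal v a b hab).resolve_left⟩
  rw [hba, card_filter_add_card_filter_not, card_univ]

end Election

section Blanketing

variable {C : Type*} (s : C → C → ℝ) (α β : ℝ)

/-- Conditions (I) and (II) of the blanketing definition for a single `k`. -/
def Dominates (k j : C) : Prop :=
  β < s k j ∧ (s k j ≤ α → ∀ l, l ≠ k → l ≠ j → s k l ≤ β → s j l < β)

def Blankets (i j : C) : Prop :=
  ∀ k, (k = i ∨ α ≤ s k i) → Dominates s α β k j

theorem not_blankets_iff {i j : C} :
    ¬ Blankets s α β i j ↔ ∃ k, (k = i ∨ α ≤ s k i) ∧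
      (s k j ≤ β ∨ (s k j ≤ α ∧ ∃ l, l ≠ k ∧ l ≠ j ∧ s k l ≤ β ∧ β ≤ s j l)) := by
  simp only [Blankets, Dominates, not_forall, not_and_or, not_lt, exists_prop]

noncomputable def wins [Fintype C] (z : C) : Finset C :=
  univ.filter fun l => β ≤ s z l

variable {s α β}

theorem not_dominates_self (hself : ∀ a, s a a = 0) (hβ : 0 < β) (a : C) :
    ¬ Dominates s α β a a := by
  rintro ⟨hlt, -⟩
  linarith [hself a]

theorem card_wins_lt_of_dominates [Fintype C] (hself : ∀ a, s a a = 0)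
    (hsum : ∀ a b, a ≠ b → s a b + s b a = 1) (hβ : 1 / 2 < β) {y z : C}
    (hdom : Dominates s α β y z) (hα : s y z ≤ α) :
    (wins s β z).card < (wins s β y).card := by
  obtain ⟨hyz, hII⟩ := hdom
  have hzy : z ≠ y := by rintro rfl; linarith [hself z]
  have hsub : wins s β z ⊆ wins s β y := by
    intro l hl
    simp only [wins, mem_filter, mem_univ, true_and] at hl ⊢
    by_contra! hyl
    have hlz : l ≠ z := by rintro rfl; linarith [hself l]
    have hly : l ≠ y := by rintro rfl; linarith [hsum z l hzy]
    linarith [hII hα l hly hlz hyl.le]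
  refine card_lt_card ((ssubset_iff_of_subset hsub).mpr ⟨z, ?_, ?_⟩)
  · simpa [wins] using hyz.le
  · simpa [wins, hself] using hβ.trans' (by norm_num)

theorem Blankets.dominates_of_lt {i j k : C} (h : Blankets s α β i j) (hk : α < s k i) :
    Dominates s α β k j :=
  h k (Or.inr hk.le)

variable {b : C → C}

theorem exists_dominates_le_or_dominates (hb : ∀ j, Blankets s α β (b j) j) {y j : C} :
    ∀ {m : ℕ}, Dominates s α β y (b^[m] j) →
      (∃ t, Dominates s α β y (b^[t] j) ∧ s y (b^[t] j) ≤ α) ∨ Dominates s α β y j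
  | 0, h => Or.inr h
  | m + 1, h => by
    by_cases hα : s y (b^[m + 1] j) ≤ α
    · exact Or.inl ⟨m + 1, h, hα⟩
    · rw [iterate_succ_apply'] at hα
      exact exists_dominates_le_or_dominates hb ((hb _).dominates_of_lt (not_le.mp hα))

theorem IsPeriodicPt.exists_dominates_iterate (hb : ∀ j, Blankets s α β (b j) j)
    (hself : ∀ a, s a a = 0) (hβ : 0 < β) {n : ℕ} {y : C} (hn : 0 < n) (hy : IsPeriodicPt b n y) :
    ∃ t, Dominates s α β y (b^[t] y) ∧ s y (b^[t] y) ≤ α := by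
  have hprev : b (b^[n - 1] y) = y := by
    rw [← iterate_succ_apply' b, Nat.succ_eq_add_one, Nat.sub_one_add_one_eq_of_pos hn]
    exact hy
  have hdom : Dominates s α β y (b^[n - 1] y) := hb _ y (Or.inl hprev.symm)
  exact (exists_dominates_le_or_dominates hb hdom).resolve_right (not_dominates_self hself hβ y)

theorem exists_not_blankets [Fintype C] [Nonempty C] (hself : ∀ a, s a a = 0)
    (hsum : ∀ a b, a ≠ b → s a b + s b a = 1) (hβ : 1 / 2 < β) (b : C → C) :
    ∃ j, ¬ Blankets s α β (b j) j := by
  by_contra! hb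
  obtain ⟨n, hn, x, hx⟩ := exists_isPeriodicPt_of_finite b
  obtain ⟨y, hy, hmin⟩ := Set.exists_min_image {y | IsPeriodicPt b n y}
    (fun y => (wins s β y).card) (Set.toFinite _) ⟨x, hx⟩
  obtain ⟨t, hdom, hα⟩ :=
    IsPeriodicPt.exists_dominates_iterate hb hself (by linarith) hn hy
  exact (card_wins_lt_of_dominates hself hsum hβ hdom hα).not_ge
    (hmin _ (IsPeriodicPt.apply_iterate hy t))

theorem exists_forall_not_blankets [Fintype C] [Nonempty C] (hself : ∀ a, s a a = 0)
    (hsum : ∀ a b, a ≠ b → s a b + s b a = 1) (hβ : 1 / 2 < β) :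
    ∃ j, ∀ i, ¬ Blankets s α β i j := by
  by_contra! h
  choose b hb using h
  obtain ⟨j, hj⟩ := exists_not_blankets hself hsum hβ b
  exact hj (hb j)

end Blanketing

theorem stmt9_general {V C : Type*} [Fintype V] [Nonempty V] [Fintype C] [Nonempty C]
    (pref : V → C → C → Prop) [∀ v, DecidableRel (pref v)]
    (hirr : ∀ v a b, pref v a b → ¬ pref v b a)
    (htotal : ∀ v (a b : C), a ≠ b → pref v a b ∨ pref v b a)
    (s : C → C → ℝ)
    (hs : ∀ a b, s a b =
      ((Finset.univ.filter fun v => pref v a b).card : ℝ) / (Fintype.card V))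
    (α β : ℝ) (hβ : 1/2 < β) :
    ∃ jstar : C, ∀ istar : C, istar ≠ jstar →
      ∃ k : C, (k = istar ∨ s k istar ≥ α) ∧
        (s k jstar ≤ β ∨
          (s k jstar ≤ α ∧ ∃ l : C, l ≠ k ∧ l ≠ jstar ∧ s k l ≤ β ∧ β ≤ s jstar l)) := by
  have hself (a : C) : s a a = 0 := by
    rw [hs, card_filter_pref_self pref hirr, Nat.cast_zero, zero_div]
  have hsum (a b : C) (hab : a ≠ b) : s a b + s b a = 1 := by
    rw [hs, hs, ← add_div, ← Nat.cast_add,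
      card_filter_pref_add_card_filter_pref pref hirr htotal hab]
    exact div_self (Nat.cast_ne_zero.mpr Fintype.card_ne_zero)
  obtain ⟨j, hj⟩ := exists_forall_not_blankets (α := α) hself hsum hβ
  exact ⟨j, fun i _ => (not_blankets_iff s α β).mp (hj i)⟩

/-- Existence of an (α,β)-unblanketed candidate, for α ≥ β > 1/2, in any finite
election: there is a candidate `j*` such that for every `i* ≠ j*` there exists a
candidate `k` with (`k = i*` or `s_{k≻i*} ≥ α`) and either `s_{k≻j*} ≤ β`, or
(`s_{k≻j*} ≤ α` and there exists `ℓ ∉ {k, j*}` with `s_{k≻ℓ} ≤ β ≤ s_{j*≻ℓ}`). -/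
theorem stmt9 {V C : Type*} [Fintype V] [Nonempty V] [Fintype C] [Nonempty C]
    (pref : V → C → C → Prop) [∀ v, DecidableRel (pref v)]
    (htrans : ∀ v, Transitive (pref v))
    (hirr : ∀ v a b, pref v a b → ¬ pref v b a)
    (htotal : ∀ v (a b : C), a ≠ b → pref v a b ∨ pref v b a)
    (s : C → C → ℝ)
    (hs : ∀ a b, s a b =
      ((Finset.univ.filter fun v => pref v a b).card : ℝ) / (Fintype.card V))
    (α β : ℝ) (hαβ : β ≤ α) (hβ : 1/2 < β) :
    ∃ jstar : C, ∀ istar : C, istar ≠ jstar →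
      ∃ k : C, (k = istar ∨ s k istar ≥ α) ∧
        (s k jstar ≤ β ∨
          (s k jstar ≤ α ∧ ∃ l : C, l ≠ k ∧ l ≠ jstar ∧ s k l ≤ β ∧ β ≤ s jstar l)) :=
  stmt9_general pref hirr htotal s hs α β hβ
end

section
/- If in every finite election every candidate is (α,β)-blanketed by another candidate (with α ≥ β > 1/2), then there exists a cycle of candidates c_1 → c_2 → ⋯ → c_r → c_1 such that s_{c_t ≻ c_{t+1}} > β for each consecutive pair. Moreover in any such cycle, for each fixed candidate k on the cycle there exists a consecutive pair (i*, j*) on the cycle such that β < s_{k≻j*} < α and (k = i* or s_{k≻i*} ≥ α). -/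
/-- If in a finite election every candidate is (α,β)-blanketed by another
candidate (α ≥ β > 1/2), then there exists a (blanketing) cycle of candidates
`c_1 → ⋯ → c_r → c_1` with `s_{c_t ≻ c_{t+1}} > β` for each consecutive pair.
Moreover, in any such blanketing cycle, for each fixed candidate `c t0` on the
cycle there is a consecutive pair `(c t, c (t+1))` with
`β < s_{c t0 ≻ c (t+1)} < α` and (`c t0 = c t` or `s_{c t0 ≻ c t} ≥ α`). -/
theorem stmt10 {V C : Type*} [Fintype V] [Nonempty V] [Fintype C] [Nonempty C]
    (pref : V → C → C → Prop) [∀ v, DecidableRel (pref v)]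
    (htrans : ∀ v, Transitive (pref v))
    (hirr : ∀ v a b, pref v a b → ¬ pref v b a)
    (htotal : ∀ v (a b : C), a ≠ b → pref v a b ∨ pref v b a)
    (s : C → C → ℝ)
    (hs : ∀ a b, s a b =
      ((Finset.univ.filter fun v => pref v a b).card : ℝ) / (Fintype.card V))
    (α β : ℝ) (hαβ : β ≤ α) (hβ : 1/2 < β)
    (blankets : C → C → Prop)
    (hbl : ∀ i j, blankets i j ↔ ∀ k : C, (k = i ∨ s k i ≥ α) →
      (s k j > β ∧ (s k j > α ∨ ∀ l : C, l ≠ k → l ≠ j → s k l ≤ β → s j l < β)))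
    (hall : ∀ j : C, ∃ i : C, i ≠ j ∧ blankets i j) :
    (∃ r : ℕ, 2 ≤ r ∧ ∃ c : ZMod r → C, Function.Injective c ∧
      (∀ t, blankets (c t) (c (t+1))) ∧ (∀ t, s (c t) (c (t+1)) > β)) ∧
    (∀ r : ℕ, 2 ≤ r → ∀ c : ZMod r → C, Function.Injective c →
      (∀ t, blankets (c t) (c (t+1))) → ∀ t0 : ZMod r,
        ∃ t : ZMod r, β < s (c t0) (c (t+1)) ∧ s (c t0) (c (t+1)) < α ∧
          (c t0 = c t ∨ s (c t0) (c t) ≥ α)) := by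
  classical
  -- s a a = 0
  have hs_self : ∀ a : C, s a a = 0 := by
    intro a
    have hemp : (Finset.univ.filter fun v => pref v a a) = ∅ := by
      ext v
      simp only [Finset.mem_filter, Finset.mem_univ, true_and, Finset.notMem_empty, iff_false]
      exact fun h => hirr v a a h h
    rw [hs, hemp]
    simp
  -- blankets implies s > β (take k = i)
  have hblβ : ∀ i j, blankets i j → s i j > β := fun i j h =>
    (((hbl i j).1 h) i (Or.inl rfl)).1
  constructor
  · -- Part 1: existence of a cycle
    choose f hfne hfbl using hall
    set x : ℕ → C := fun k => f^[k] (Classical.arbitrary C) with hxdef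
    have hx : ∀ k, x (k+1) = f (x k) := fun k => Function.iterate_succ_apply' f k _
    have hbl_step : ∀ k, blankets (x (k+1)) (x k) := fun k => (hx k) ▸ hfbl (x k)
    have hne_step : ∀ k, x (k+1) ≠ x k := fun k => (hx k) ▸ hfne (x k)
    have hex : ∃ n, ∃ m, m < n ∧ x m = x n := by
      obtain ⟨a, b, hne, heq⟩ := Finite.exists_ne_map_eq_of_infinite x
      rcases hne.lt_or_gt with h | h
      · exact ⟨b, a, h, heq⟩
      · exact ⟨a, b, h, heq.symm⟩
    set n := Nat.find hex with hndef
    obtain ⟨m, hmn, hxmn⟩ := Nat.find_spec hex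
    have hinj : ∀ a b, a < n → b < n → x a = x b → a = b := by
      intro a b ha hb hab
      by_contra hne
      rcases Nat.lt_or_ge a b with h | h
      · exact Nat.find_min hex hb ⟨a, h, hab⟩
      · have h' : b < a := lt_of_le_of_ne h (Ne.symm hne)
        exact Nat.find_min hex ha ⟨b, h', hab.symm⟩
    set r := n - m with hrdef
    have hnm : n = m + r := by omega
    have hr1 : 1 ≤ r := by omega
    have hr2 : 2 ≤ r := by
      rcases Nat.lt_or_ge r 2 with h | h
      · exfalso
        have : n = m + 1 := by omega
        exact hne_step m (by rw [← this, ← hxmn])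
      · exact h
    haveI : NeZero r := ⟨by omega⟩
    haveI : Fact (1 < r) := ⟨by omega⟩
    set c : ZMod r → C := fun t => x (m + (r - 1 - t.val)) with hcdef
    have hcyc : ∀ t : ZMod r, blankets (c t) (c (t+1)) := by
      intro t
      show blankets (x (m + (r - 1 - t.val))) (x (m + (r - 1 - (t+1).val)))
      have hv : t.val < r := ZMod.val_lt t
      have hval1 : (t + 1).val = (t.val + 1) % r := by
        rw [ZMod.val_add, ZMod.val_one]
      rcases Nat.lt_or_ge t.val (r - 1) with h | h
      · have hv1 : (t + 1).val = t.val + 1 := by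
          rw [hval1, Nat.mod_eq_of_lt (by omega)]
        rw [hv1]
        have harith : m + (r - 1 - t.val) = (m + (r - 1 - (t.val + 1))) + 1 := by omega
        rw [harith]
        exact hbl_step _
      · have htv : t.val = r - 1 := by omega
        have hv1 : (t + 1).val = 0 := by
          rw [hval1, htv]
          have : r - 1 + 1 = r := by omega
          rw [this, Nat.mod_self]
        rw [hv1, htv]
        have h1 : m + (r - 1 - (r - 1)) = m := by omega
        rw [h1, hxmn, ← hndef, hnm]
        have h2 : m + r = (m + (r - 1 - 0)) + 1 := by omega
        rw [h2]
        exact hbl_step _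
    refine ⟨r, hr2, c, ?_, hcyc, fun t => hblβ _ _ (hcyc t)⟩
    intro t t' h
    have h' : x (m + (r - 1 - t.val)) = x (m + (r - 1 - t'.val)) := h
    have hv : t.val < r := ZMod.val_lt t
    have hv' : t'.val < r := ZMod.val_lt t'
    have h1 : m + (r - 1 - t.val) < n := by omega
    have h2 : m + (r - 1 - t'.val) < n := by omega
    have := hinj _ _ h1 h2 h'
    have hval : t.val = t'.val := by omega
    exact ZMod.val_injective r hval
  · -- Part 2: the moreover statement
    intro r hr c hcinj hcbl t0
    haveI : NeZero r := ⟨by omega⟩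
    have hα0 : (0:ℝ) < α := lt_of_lt_of_le (lt_of_lt_of_le (by norm_num) hβ.le) hαβ
    have hexQ : ∃ j : ℕ, s (c t0) (c (t0 + ((j : ℕ) + 1 : ℕ))) < α := by
      refine ⟨r - 1, ?_⟩
      have : ((r - 1 + 1 : ℕ) : ZMod r) = 0 := by
        have : r - 1 + 1 = r := by omega
        rw [this, ZMod.natCast_self]
      rw [this, add_zero, hs_self]
      exact hα0
    set j := Nat.find hexQ with hjdef
    have hQj := Nat.find_spec hexQ
    have hcast : t0 + (j : ZMod r) + 1 = t0 + ((j + 1 : ℕ) : ZMod r) := by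
      rw [Nat.cast_add, Nat.cast_one]; ring
    have hyp : c t0 = c (t0 + (j : ZMod r)) ∨ s (c t0) (c (t0 + (j : ZMod r))) ≥ α := by
      rcases Nat.eq_zero_or_pos j with h0 | hpos
      · left; rw [h0]; norm_num
      · right
        have hj' : j - 1 < j := by omega
        have hQ := Nat.find_min hexQ hj'
        have hj1 : j - 1 + 1 = j := by omega
        rw [hj1] at hQ
        exact le_of_not_gt hQ
    refine ⟨t0 + (j : ZMod r), ?_, ?_, hyp⟩
    · exact (((hbl _ _).1 (hcbl (t0 + (j : ZMod r)))) (c t0) hyp).1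
    · rw [hcast]; exact hQj
end

section
/- In the metric voting setting, if for all partitions of the candidates C = I ⊔ J with i* ∈ I and j* ∈ J it holds that s_{I≻j*} ≤ λ(1 − s_{i*≻J}), then SC(j*) ≤ (1 + 2λ)·SC(i*). -/
/-!
Write `SC(j*) - SC(i*) = ∑ᵥ (d(v, j*) - d(v, i*))` and compare level sets (layer cake): it
suffices that for every `t > 0` the voters with excess `d(v, j*) - d(v, i*) ≥ t` are at most `λ`
times as many as those with `2 d(v, i*) ≥ t`. Split the candidates into the open ball `I` of
radius `t` around `i*` and its complement `J` (which contains `j*` as soon as some voter has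
excess `≥ t`). By the triangle inequality a voter with excess `≥ t` prefers every candidate
of `I` to `j*`, while a voter with `2 d(v, i*) < t` prefers `i*` to every candidate of `J`.
The hypothesis for the partition `(I, J)` compares exactly these two counts.
-/

open MeasureTheory Finset

theorem lintegral_ofReal_le_mul_of_meas_le {α : Type*} [MeasurableSpace α] {μ : Measure α}
    {f g : α → ℝ} (hf : 0 ≤ᵐ[μ] f) (hg : 0 ≤ᵐ[μ] g) (hfm : AEMeasurable f μ)
    (hgm : AEMeasurable g μ) {c : ENNReal} (hc : c ≠ ⊤)
    (H : ∀ t > 0, μ {x | t ≤ f x} ≤ c * μ {x | t ≤ g x}) :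
    ∫⁻ x, ENNReal.ofReal (f x) ∂μ ≤ c * ∫⁻ x, ENNReal.ofReal (g x) ∂μ := by
  rw [lintegral_eq_lintegral_meas_le μ hf hfm, lintegral_eq_lintegral_meas_le μ hg hgm,
    ← lintegral_const_mul' c _ hc]
  exact setLIntegral_mono' measurableSet_Ioi H

theorem Finset.sum_le_mul_sum_of_card_le {ι : Type*} [Fintype ι] {f g : ι → ℝ} (hg : 0 ≤ g)
    {c : ℝ} (hc : 0 ≤ c) (H : ∀ t > 0, (#{i | t ≤ f i} : ℝ) ≤ c * #{i | t ≤ g i}) :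
    ∑ i, f i ≤ c * ∑ i, g i := by
  let _ : MeasurableSpace ι := ⊤
  have : DiscreteMeasurableSpace ι := ⟨fun _ => trivial⟩
  have hcount (φ : ι → ℝ) (t : ℝ) :
      Measure.count {i | t ≤ φ i} = ENNReal.ofReal #{i | t ≤ φ i} := by
    rw [ENNReal.ofReal_natCast, ← Measure.count_apply_finset, coe_filter]
    simp only [mem_univ, true_and]
  -- Layer cake needs `f ≥ 0`; for `t > 0`, `f` and `max f 0` have the same level sets.
  have key : ∫⁻ i, ENNReal.ofReal (max (f i) 0) ∂.count ≤
      ENNReal.ofReal c * ∫⁻ i, ENNReal.ofReal (g i) ∂.count := by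
    refine lintegral_ofReal_le_mul_of_meas_le (f := fun i => max (f i) 0)
      (.of_forall fun _ => le_max_right _ _) (.of_forall hg) .of_discrete .of_discrete
      ENNReal.ofReal_ne_top fun t ht => ?_
    have hpos : {i | t ≤ max (f i) 0} = {i | t ≤ f i} := by
      ext i; simp [not_le.2 ht]
    rw [hpos, hcount, hcount, ← ENNReal.ofReal_mul hc]
    exact ENNReal.ofReal_le_ofReal (H t ht)
  simp only [lintegral_fintype, Measure.count_singleton, mul_one] at key
  rw [← ENNReal.ofReal_sum_of_nonneg fun i _ => le_max_right _ _,
    ← ENNReal.ofReal_sum_of_nonneg fun i _ => hg i, ← ENNReal.ofReal_mul hc,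
    ENNReal.ofReal_le_ofReal_iff (mul_nonneg hc (sum_nonneg fun i _ => hg i))] at key
  exact (sum_le_sum fun i _ => le_max_left _ _).trans key

theorem Finset.card_filter_le_mul_card_filter_not_of_div_le {V : Type*} [Fintype V] [Nonempty V]
    {P Q : V → Prop} [DecidablePred P] [DecidablePred Q] {lam : ℝ}
    (h : (#{v | P v} : ℝ) / Fintype.card V ≤ lam * (1 - #{v | Q v} / Fintype.card V)) :
    (#{v | P v} : ℝ) ≤ lam * #{v | ¬ Q v} := by
  have hn : (0 : ℝ) < Fintype.card V := by exact_mod_cast Fintype.card_pos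
  have hQ : (Fintype.card V : ℝ) - #{v | Q v} = #{v | ¬ Q v} := by
    rw [sub_eq_iff_eq_add']
    exact_mod_cast (card_filter_add_card_filter_not (s := univ) Q).symm
  rwa [one_sub_div hn.ne', hQ, mul_div_assoc', div_le_div_iff_of_pos_right hn] at h

section MetricVoting

variable {X V C : Type*} [PseudoMetricSpace X] {vloc : V → X} {cloc : C → X}
  {pref : V → C → C → Prop}

theorem pref_of_dist_lt_of_le_sub_dist
    (hconsist : ∀ v a b, dist (vloc v) (cloc a) < dist (vloc v) (cloc b) → pref v a b)
    {v : V} {i j c : C} {t : ℝ} (hc : dist (cloc i) (cloc c) < t)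
    (hv : t ≤ dist (vloc v) (cloc j) - dist (vloc v) (cloc i)) : pref v c j :=
  hconsist v c j <| by linarith [dist_triangle (vloc v) (cloc i) (cloc c)]

theorem pref_of_two_mul_dist_lt_of_le_dist
    (hconsist : ∀ v a b, dist (vloc v) (cloc a) < dist (vloc v) (cloc b) → pref v a b)
    {v : V} {i j : C} {t : ℝ} (hv : 2 * dist (vloc v) (cloc i) < t)
    (hj : t ≤ dist (cloc i) (cloc j)) : pref v i j :=
  hconsist v i j <| by linarith [dist_triangle_left (cloc i) (cloc j) (vloc v)]

variable [Fintype V] [Fintype C] [DecidableEq C] [∀ v, DecidableRel (pref v)]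

theorem card_le_sub_dist_le_mul_card_le_two_mul_dist
    (hconsist : ∀ v a b, dist (vloc v) (cloc a) < dist (vloc v) (cloc b) → pref v a b)
    {lam : ℝ} (hlam : 0 ≤ lam) {i j : C}
    (hcount : ∀ I J : Finset C, I ∪ J = univ → Disjoint I J → i ∈ I → j ∈ J →
      (#{v | ∀ c ∈ I, pref v c j} : ℝ) ≤ lam * #{v | ¬ ∀ c ∈ J, pref v i c})
    {t : ℝ} (ht : 0 < t) :
    (#{v | t ≤ dist (vloc v) (cloc j) - dist (vloc v) (cloc i)} : ℝ) ≤
      lam * #{v | t ≤ 2 * dist (vloc v) (cloc i)} := by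
  by_cases hj : t ≤ dist (cloc i) (cloc j)
  swap
  · have hempty :
        ({v | t ≤ dist (vloc v) (cloc j) - dist (vloc v) (cloc i)} : Finset V) = ∅ :=
      filter_eq_empty_iff.2 fun v _ hv =>
        hj <| hv.trans <| by linarith [dist_triangle (vloc v) (cloc i) (cloc j)]
    rw [hempty, card_empty, Nat.cast_zero]
    positivity
  set I : Finset C := {c | dist (cloc i) (cloc c) < t}
  calc (#{v | t ≤ dist (vloc v) (cloc j) - dist (vloc v) (cloc i)} : ℝ)
      ≤ #{v | ∀ c ∈ I, pref v c j} := by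
        refine mod_cast card_le_card fun v hv => ?_
        simp only [I, mem_filter, mem_univ, true_and] at hv ⊢
        exact fun c hc => pref_of_dist_lt_of_le_sub_dist hconsist hc hv
    _ ≤ lam * #{v | ¬ ∀ c ∈ Iᶜ, pref v i c} :=
        hcount I Iᶜ (union_compl I) disjoint_compl_right (by simpa [I]) (by simpa [I])
    _ ≤ lam * #{v | t ≤ 2 * dist (vloc v) (cloc i)} := by
        refine mul_le_mul_of_nonneg_left (mod_cast card_le_card fun v hv => ?_) hlam
        simp only [I, mem_filter, mem_univ, true_and, mem_compl, not_lt, not_forall] at hv ⊢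
        obtain ⟨c, hc, hnot⟩ := hv
        by_contra! hvi
        exact hnot (pref_of_two_mul_dist_lt_of_le_dist hconsist hvi hc)

theorem sum_dist_le_of_card_le
    (hconsist : ∀ v a b, dist (vloc v) (cloc a) < dist (vloc v) (cloc b) → pref v a b)
    {lam : ℝ} (hlam : 0 ≤ lam) {i j : C}
    (hcount : ∀ I J : Finset C, I ∪ J = univ → Disjoint I J → i ∈ I → j ∈ J →
      (#{v | ∀ c ∈ I, pref v c j} : ℝ) ≤ lam * #{v | ¬ ∀ c ∈ J, pref v i c}) :
    ∑ v, dist (vloc v) (cloc j) ≤ (1 + 2 * lam) * ∑ v, dist (vloc v) (cloc i) := by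
  have hexcess := sum_le_mul_sum_of_card_le
    (f := fun v => dist (vloc v) (cloc j) - dist (vloc v) (cloc i))
    (g := fun v => 2 * dist (vloc v) (cloc i)) (fun v => by positivity) hlam
    fun t ht => card_le_sub_dist_le_mul_card_le_two_mul_dist hconsist hlam hcount ht
  rw [sum_sub_distrib, ← mul_sum] at hexcess
  linarith

end MetricVoting

theorem stmt12_general {X V C : Type*} [PseudoMetricSpace X] [Fintype V] [Nonempty V] [Fintype C] [DecidableEq C]
    (vloc : V → X) (cloc : C → X)
    (pref : V → C → C → Prop) [∀ v, DecidableRel (pref v)]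
    (hconsist : ∀ v a b, dist (vloc v) (cloc a) < dist (vloc v) (cloc b) → pref v a b)
    (sIto : Finset C → C → ℝ)
    (hsIto : ∀ I j, sIto I j =
      ((Finset.univ.filter fun v => ∀ i ∈ I, pref v i j).card : ℝ) / (Fintype.card V))
    (stoJ : C → Finset C → ℝ)
    (hstoJ : ∀ i J, stoJ i J =
      ((Finset.univ.filter fun v => ∀ j ∈ J, pref v i j).card : ℝ) / (Fintype.card V))
    (lam : ℝ) (hlam : 0 ≤ lam)
    (istar jstar : C)
    (h : ∀ I J : Finset C, I ∪ J = Finset.univ → Disjoint I J →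
      istar ∈ I → jstar ∈ J → sIto I jstar ≤ lam * (1 - stoJ istar J)) :
    ∑ v : V, dist (vloc v) (cloc jstar) ≤
      (1 + 2*lam) * ∑ v : V, dist (vloc v) (cloc istar) := by
  refine sum_dist_le_of_card_le hconsist hlam fun I J hunion hdisj hi hj => ?_
  have hfrac := h I J hunion hdisj hi hj
  rw [hsIto, hstoJ] at hfrac
  exact card_filter_le_mul_card_filter_not_of_div_le hfrac

/-- The LP sufficient condition: in the metric voting setting, if for all
partitions `C = I ⊔ J` with `i* ∈ I` and `j* ∈ J` we have
`s_{I≻j*} ≤ λ(1 − s_{i*≻J})`, then `SC(j*) ≤ (1 + 2λ)·SC(i*)`. -/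
theorem stmt12 {X V C : Type*} [PseudoMetricSpace X] [Fintype V] [Nonempty V] [Fintype C] [DecidableEq C]
    (vloc : V → X) (cloc : C → X)
    (pref : V → C → C → Prop) [∀ v, DecidableRel (pref v)]
    (htrans : ∀ v, Transitive (pref v))
    (hirr : ∀ v a b, pref v a b → ¬ pref v b a)
    (htotal : ∀ v (a b : C), a ≠ b → pref v a b ∨ pref v b a)
    (hconsist : ∀ v a b, dist (vloc v) (cloc a) < dist (vloc v) (cloc b) → pref v a b)
    (sIto : Finset C → C → ℝ)
    (hsIto : ∀ I j, sIto I j =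
      ((Finset.univ.filter fun v => ∀ i ∈ I, pref v i j).card : ℝ) / (Fintype.card V))
    (stoJ : C → Finset C → ℝ)
    (hstoJ : ∀ i J, stoJ i J =
      ((Finset.univ.filter fun v => ∀ j ∈ J, pref v i j).card : ℝ) / (Fintype.card V))
    (lam : ℝ) (hlam : 0 ≤ lam)
    (istar jstar : C)
    (h : ∀ I J : Finset C, I ∪ J = Finset.univ → Disjoint I J →
      istar ∈ I → jstar ∈ J → sIto I jstar ≤ lam * (1 - stoJ istar J)) :
    ∑ v : V, dist (vloc v) (cloc jstar) ≤
      (1 + 2*lam) * ∑ v : V, dist (vloc v) (cloc istar) :=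
  stmt12_general vloc cloc pref hconsist sIto hsIto stoJ hstoJ lam hlam istar jstar h
end

section
/- In the metric voting setting, if for all partitions C = I ⊔ J with i* ∈ I and j* ∈ J it holds that min_{i∈I} s_{i≻j*} ≤ λ · max_{j∈J} s_{j≻i*}, then SC(j*) ≤ (1 + 2λ)·SC(i*). -/
/-!
Write `D c = d(i*, c)`. For a voter `v` let `X v` be the least `D c` over the candidates `c`
that `v` ranks no higher than `j*`, and for a voter `u` let `M u` be the largest `D c` over the
candidates `u` ranks no lower than `i*`. The triangle inequality gives
`d(v, j*) ≤ d(v, i*) + X v` and `M u ≤ 2 d(u, i*)`. For `θ > 0`, cut the candidates into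
`I = {D ≤ θ}` and `J = {D > θ}`: a voter with `X v > θ` prefers every `i ∈ I` to `j*`, and a
voter preferring some `j ∈ J` to `i*` has `M u > θ`. The hypothesis, read through the
minimising `i ∈ I` and the maximising `j ∈ J`, therefore gives `#{X > θ} ≤ λ #{M > θ}` for
every `θ > 0`, and integrating over `θ` (layer cake) yields `∑ X ≤ λ ∑ M ≤ 2λ SC(i*)`.
-/

open MeasureTheory Finset

theorem ofReal_sum_eq_lintegral_card_lt {W : Type*} [Fintype W] {f : W → ℝ} (hf : 0 ≤ f) :
    ENNReal.ofReal (∑ w, f w) = ∫⁻ θ in Set.Ioi 0, (#{w | θ < f w} : ENNReal) := by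
  let _ : MeasurableSpace W := ⊤
  have : MeasurableSingletonClass W := ⟨fun _ => trivial⟩
  have layercake := lintegral_eq_lintegral_meas_lt Measure.count
    (Filter.Eventually.of_forall hf) (measurable_of_countable f).aemeasurable
  simp only [lintegral_fintype, Measure.count_singleton, mul_one] at layercake
  simp only [ENNReal.ofReal_sum_of_nonneg fun w _ => hf w, layercake,
    ← Measure.count_apply_finset, coe_filter, Finset.mem_univ, true_and]

theorem sum_le_mul_sum_of_card_lt_le {V U : Type*} [Fintype V] [Fintype U]
    {X : V → ℝ} {M : U → ℝ} {lam : ℝ} (hlam : 0 ≤ lam) (hX : 0 ≤ X) (hM : 0 ≤ M)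
    (hcut : ∀ θ > 0, (#{v | θ < X v} : ℝ) ≤ lam * #{u | θ < M u}) :
    ∑ v, X v ≤ lam * ∑ u, M u := by
  have hcut' : ∀ θ ∈ Set.Ioi (0 : ℝ),
      (#{v | θ < X v} : ENNReal) ≤ ENNReal.ofReal lam * #{u | θ < M u} := fun θ hθ => by
    simpa [ENNReal.ofReal_mul hlam] using ENNReal.ofReal_le_ofReal (hcut θ hθ)
  rw [← ENNReal.ofReal_le_ofReal_iff (mul_nonneg hlam (sum_nonneg fun u _ => hM u)),
    ENNReal.ofReal_mul hlam, ofReal_sum_eq_lintegral_card_lt hX, ofReal_sum_eq_lintegral_card_lt hM,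
    ← lintegral_const_mul' _ _ ENNReal.ofReal_ne_top]
  exact setLIntegral_mono' measurableSet_Ioi hcut'

theorem dist_le_dist_of_pref {X V C : Type*} [PseudoMetricSpace X] {vloc : V → X} {cloc : C → X}
    {pref : V → C → C → Prop} (hirr : ∀ v a b, pref v a b → ¬ pref v b a)
    (hconsist : ∀ v a b, dist (vloc v) (cloc a) < dist (vloc v) (cloc b) → pref v a b)
    {v : V} {a b : C} (h : pref v a b) : dist (vloc v) (cloc a) ≤ dist (vloc v) (cloc b) :=
  le_of_not_gt fun hlt => hirr v a b h (hconsist v b a hlt)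

section MetricVoting

variable {X V C : Type*} [PseudoMetricSpace X] [Fintype C] [DecidableEq C]
  {vloc : V → X} (cloc : C → X) (pref : V → C → C → Prop) [∀ v, DecidableRel (pref v)]
  (istar jstar : C)

def minDistBelow (v : V) : ℝ :=
  (insert jstar ({c | pref v jstar c} : Finset C)).inf' (insert_nonempty _ _)
    fun c => dist (cloc istar) (cloc c)

def maxDistAbove (u : V) : ℝ :=
  (insert istar ({c | pref u c istar} : Finset C)).sup' (insert_nonempty _ _)
    fun c => dist (cloc istar) (cloc c)

variable {cloc pref istar jstar}

theorem minDistBelow_nonneg (v : V) : 0 ≤ minDistBelow cloc pref istar jstar v :=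
  le_inf' _ _ fun _ _ => dist_nonneg

theorem minDistBelow_le (v : V) :
    minDistBelow cloc pref istar jstar v ≤ dist (cloc istar) (cloc jstar) :=
  inf'_le _ (mem_insert_self _ _)

theorem maxDistAbove_nonneg (u : V) : 0 ≤ maxDistAbove cloc pref istar u :=
  le_sup'_of_le _ (mem_insert_self _ _) dist_nonneg

theorem dist_le_dist_add_minDistBelow
    (hweak : ∀ v a b, pref v a b → dist (vloc v) (cloc a) ≤ dist (vloc v) (cloc b)) (v : V) :
    dist (vloc v) (cloc jstar) ≤
      dist (vloc v) (cloc istar) + minDistBelow cloc pref istar jstar v := by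
  obtain ⟨c, hc, hmin⟩ :=
    exists_mem_eq_inf' (insert_nonempty jstar ({c | pref v jstar c} : Finset C))
      fun c => dist (cloc istar) (cloc c)
  rw [minDistBelow, hmin]
  rcases mem_insert.mp hc with rfl | hc
  · exact dist_triangle _ _ _
  · exact (hweak v _ _ (mem_filter.mp hc).2).trans (dist_triangle _ _ _)

theorem maxDistAbove_le_two_mul_dist
    (hweak : ∀ v a b, pref v a b → dist (vloc v) (cloc a) ≤ dist (vloc v) (cloc b)) (u : V) :
    maxDistAbove cloc pref istar u ≤ 2 * dist (vloc u) (cloc istar) := by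
  refine sup'_le _ _ fun c hc => ?_
  rcases mem_insert.mp hc with rfl | hc
  · simp
  · calc dist (cloc istar) (cloc c) ≤ dist (vloc u) (cloc istar) + dist (vloc u) (cloc c) :=
          dist_triangle_left _ _ _
      _ ≤ 2 * dist (vloc u) (cloc istar) := by
          linarith [hweak u _ _ (mem_filter.mp hc).2]

theorem pref_of_lt_minDistBelow (htotal : ∀ v (a b : C), a ≠ b → pref v a b ∨ pref v b a)
    {θ : ℝ} {v : V} (hv : θ < minDistBelow cloc pref istar jstar v) {i : C}
    (hi : dist (cloc istar) (cloc i) ≤ θ) : pref v i jstar := by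
  rw [minDistBelow, lt_inf'_iff] at hv
  have hij : i ≠ jstar := by
    rintro rfl
    exact (hv i (mem_insert_self _ _)).not_ge hi
  refine (htotal v i jstar hij).resolve_right fun hji => ?_
  exact (hv i (mem_insert_of_mem (mem_filter.mpr ⟨mem_univ _, hji⟩))).not_ge hi

theorem lt_maxDistAbove_of_pref {θ : ℝ} {u : V} {j : C} (hj : θ < dist (cloc istar) (cloc j))
    (h : pref u j istar) : θ < maxDistAbove cloc pref istar u :=
  (lt_sup'_iff _).mpr ⟨j, mem_insert_of_mem (mem_filter.mpr ⟨mem_univ _, h⟩), hj⟩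

theorem card_lt_minDistBelow_le [Fintype V]
    (htotal : ∀ v (a b : C), a ≠ b → pref v a b ∨ pref v b a) {lam : ℝ} (hlam : 0 ≤ lam)
    (hcard : ∀ I J : Finset C, I ∪ J = univ → Disjoint I J → istar ∈ I → jstar ∈ J →
      (#{v | ∀ i ∈ I, pref v i jstar} : ℝ) ≤ lam * #{u | ∃ j ∈ J, pref u j istar})
    {θ : ℝ} (hθ : 0 < θ) :
    (#{v | θ < minDistBelow cloc pref istar jstar v} : ℝ) ≤
      lam * #{u | θ < maxDistAbove cloc pref istar u} := by
  by_cases hj : θ < dist (cloc istar) (cloc jstar)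
  · set I : Finset C := {c | dist (cloc istar) (cloc c) ≤ θ}
    have hi : istar ∈ I := by simpa [I] using hθ.le
    have hj' : jstar ∈ Iᶜ := by simpa [I] using hj
    calc (#{v | θ < minDistBelow cloc pref istar jstar v} : ℝ)
        ≤ #{v | ∀ i ∈ I, pref v i jstar} := by
          refine Nat.cast_le.mpr (card_le_card (monotone_filter_right _ fun v _ hv i hiI => ?_))
          exact pref_of_lt_minDistBelow htotal hv (mem_filter.mp hiI).2
      _ ≤ lam * #{u | ∃ j ∈ Iᶜ, pref u j istar} :=
          hcard I Iᶜ (union_compl I) disjoint_compl_right hi hj'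
      _ ≤ lam * #{u | θ < maxDistAbove cloc pref istar u} := by
          refine mul_le_mul_of_nonneg_left (Nat.cast_le.mpr (card_le_card
            (monotone_filter_right _ fun u _ ⟨j, hjJ, hu⟩ => ?_))) hlam
          exact lt_maxDistAbove_of_pref (by simpa [I] using hjJ) hu
  · rw [filter_false_of_mem fun v _ hv => hj (hv.trans_le (minDistBelow_le v))]
    simp only [card_empty, Nat.cast_zero]
    positivity

theorem sum_dist_le_of_card_pref_le [Fintype V]
    (hweak : ∀ v a b, pref v a b → dist (vloc v) (cloc a) ≤ dist (vloc v) (cloc b))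
    (htotal : ∀ v (a b : C), a ≠ b → pref v a b ∨ pref v b a) {lam : ℝ} (hlam : 0 ≤ lam)
    (hcard : ∀ I J : Finset C, I ∪ J = univ → Disjoint I J → istar ∈ I → jstar ∈ J →
      (#{v | ∀ i ∈ I, pref v i jstar} : ℝ) ≤ lam * #{u | ∃ j ∈ J, pref u j istar}) :
    ∑ v, dist (vloc v) (cloc jstar) ≤ (1 + 2 * lam) * ∑ v, dist (vloc v) (cloc istar) := by
  calc ∑ v, dist (vloc v) (cloc jstar)
      ≤ ∑ v, (dist (vloc v) (cloc istar) + minDistBelow cloc pref istar jstar v) :=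
        sum_le_sum fun v _ => dist_le_dist_add_minDistBelow hweak v
    _ ≤ ∑ v, dist (vloc v) (cloc istar) + lam * ∑ u, maxDistAbove cloc pref istar u := by
        rw [sum_add_distrib]
        gcongr
        exact sum_le_mul_sum_of_card_lt_le hlam minDistBelow_nonneg maxDistAbove_nonneg
          fun θ => card_lt_minDistBelow_le htotal hlam hcard
    _ ≤ ∑ v, dist (vloc v) (cloc istar) + lam * ∑ u, 2 * dist (vloc u) (cloc istar) := by
        gcongr with u
        exact maxDistAbove_le_two_mul_dist hweak u
    _ = (1 + 2 * lam) * ∑ v, dist (vloc v) (cloc istar) := by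
        rw [← mul_sum]
        ring

end MetricVoting

section PairwiseMargins

variable {V C : Type*} [Fintype V] {pref : V → C → C → Prop} [∀ v, DecidableRel (pref v)]
  {s : C → C → ℝ}

theorem card_mul_eq_card_filter_pref
    (hs : ∀ a b, s a b = (#{v | pref v a b} : ℝ) / Fintype.card V) (a b : C) :
    Fintype.card V * s a b = #{v | pref v a b} := by
  rw [hs]
  -- with no voters both sides vanish, in spite of the division by zero
  refine mul_div_cancel_of_imp' fun hV => ?_
  rw [Nat.cast_eq_zero] at hV ⊢
  exact Nat.le_zero.mp (hV ▸ card_univ (α := V) ▸ card_filter_le _ _)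

theorem card_forall_pref_le_mul_min'
    (hs : ∀ a b, s a b = (#{v | pref v a b} : ℝ) / Fintype.card V) {I : Finset C} {j : C}
    [DecidablePred fun v => ∀ i ∈ I, pref v i j] (hI : (I.image fun i => s i j).Nonempty) :
    (#{v | ∀ i ∈ I, pref v i j} : ℝ) ≤
      Fintype.card V * (I.image fun i => s i j).min' hI := by
  obtain ⟨i, hi, hmin⟩ := mem_image.mp (min'_mem _ hI)
  rw [← hmin, card_mul_eq_card_filter_pref hs]
  exact Nat.cast_le.mpr (card_le_card (monotone_filter_right _ fun v _ hv => hv i hi))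

theorem mul_max'_le_card_exists_pref
    (hs : ∀ a b, s a b = (#{v | pref v a b} : ℝ) / Fintype.card V) {J : Finset C} {i : C}
    [DecidablePred fun u => ∃ j ∈ J, pref u j i] (hJ : (J.image fun j => s j i).Nonempty) :
    Fintype.card V * (J.image fun j => s j i).max' hJ ≤ #{u | ∃ j ∈ J, pref u j i} := by
  obtain ⟨j, hj, hmax⟩ := mem_image.mp (max'_mem _ hJ)
  rw [← hmax, card_mul_eq_card_filter_pref hs]
  exact Nat.cast_le.mpr (card_le_card (monotone_filter_right _ fun u _ hu => ⟨j, hj, hu⟩))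

end PairwiseMargins

theorem stmt13_general {X V C : Type*} [PseudoMetricSpace X] [Fintype V]
    [Fintype C] [DecidableEq C]
    (vloc : V → X) (cloc : C → X)
    (pref : V → C → C → Prop) [∀ v, DecidableRel (pref v)]
    (hirr : ∀ v a b, pref v a b → ¬ pref v b a)
    (htotal : ∀ v (a b : C), a ≠ b → pref v a b ∨ pref v b a)
    (hconsist : ∀ v a b, dist (vloc v) (cloc a) < dist (vloc v) (cloc b) → pref v a b)
    (s : C → C → ℝ)
    (hs : ∀ a b, s a b =
      ((Finset.univ.filter fun v => pref v a b).card : ℝ) / (Fintype.card V))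
    (lam : ℝ) (hlam : 0 ≤ lam)
    (istar jstar : C)
    (h : ∀ I J : Finset C, I ∪ J = Finset.univ → Disjoint I J →
      ∀ (hi : istar ∈ I) (hj : jstar ∈ J),
      (I.image fun i => s i jstar).min' (Finset.Nonempty.image ⟨istar, hi⟩ _) ≤
        lam * (J.image fun j => s j istar).max' (Finset.Nonempty.image ⟨jstar, hj⟩ _)) :
    ∑ v : V, dist (vloc v) (cloc jstar) ≤
      (1 + 2*lam) * ∑ v : V, dist (vloc v) (cloc istar) := by
  refine sum_dist_le_of_card_pref_le (fun _ _ _ hab => dist_le_dist_of_pref hirr hconsist hab)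
    htotal hlam fun I J hIJ hdisj hi hj => ?_
  have hmin := card_forall_pref_le_mul_min' hs (Nonempty.image ⟨istar, hi⟩ fun i => s i jstar)
  have hmax := mul_max'_le_card_exists_pref hs (Nonempty.image ⟨jstar, hj⟩ fun j => s j istar)
  calc _ ≤ _ := hmin
    _ ≤ Fintype.card V * (lam * _) := by gcongr; exact h I J hIJ hdisj hi hj
    _ = lam * (Fintype.card V * _) := mul_left_comm _ _ _
    _ ≤ _ := by gcongr

/-- In the metric voting setting, if for all partitions `C = I ⊔ J` with
`i* ∈ I`, `j* ∈ J` we have `min_{i∈I} s_{i≻j*} ≤ λ · max_{j∈J} s_{j≻i*}`,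
then `SC(j*) ≤ (1 + 2λ)·SC(i*)`. -/
theorem stmt13 {X V C : Type*} [PseudoMetricSpace X] [Fintype V] [Nonempty V]
    [Fintype C] [DecidableEq C]
    (vloc : V → X) (cloc : C → X)
    (pref : V → C → C → Prop) [∀ v, DecidableRel (pref v)]
    (htrans : ∀ v, Transitive (pref v))
    (hirr : ∀ v a b, pref v a b → ¬ pref v b a)
    (htotal : ∀ v (a b : C), a ≠ b → pref v a b ∨ pref v b a)
    (hconsist : ∀ v a b, dist (vloc v) (cloc a) < dist (vloc v) (cloc b) → pref v a b)
    (s : C → C → ℝ)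
    (hs : ∀ a b, s a b =
      ((Finset.univ.filter fun v => pref v a b).card : ℝ) / (Fintype.card V))
    (lam : ℝ) (hlam : 0 ≤ lam)
    (istar jstar : C)
    (h : ∀ I J : Finset C, I ∪ J = Finset.univ → Disjoint I J →
      ∀ (hi : istar ∈ I) (hj : jstar ∈ J),
      (I.image fun i => s i jstar).min' (Finset.Nonempty.image ⟨istar, hi⟩ _) ≤
        lam * (J.image fun j => s j istar).max' (Finset.Nonempty.image ⟨jstar, hj⟩ _)) :
    ∑ v : V, dist (vloc v) (cloc jstar) ≤
      (1 + 2*lam) * ∑ v : V, dist (vloc v) (cloc istar) :=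
  stmt13_general vloc cloc pref hirr htotal hconsist s hs lam hlam istar jstar h
end

section
/- In the metric voting setting, if s_{i*≻j*} ≤ λ/(1+λ) for λ ≥ 1, then SC(j*) ≤ (1 + 2λ)·SC(i*). -/
/-- In the metric voting setting, if `s_{i*≻j*} ≤ λ/(1+λ)` for `λ ≥ 1`, then
`SC(j*) ≤ (1 + 2λ)·SC(i*)`. -/
theorem stmt14 {X V C : Type*} [PseudoMetricSpace X] [Fintype V] [Nonempty V] [Fintype C]
    (vloc : V → X) (cloc : C → X)
    (pref : V → C → C → Prop) [∀ v, DecidableRel (pref v)]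
    (htrans : ∀ v, Transitive (pref v))
    (hirr : ∀ v a b, pref v a b → ¬ pref v b a)
    (htotal : ∀ v (a b : C), a ≠ b → pref v a b ∨ pref v b a)
    (hconsist : ∀ v a b, dist (vloc v) (cloc a) < dist (vloc v) (cloc b) → pref v a b)
    (s : C → C → ℝ)
    (hs : ∀ a b, s a b =
      ((Finset.univ.filter fun v => pref v a b).card : ℝ) / (Fintype.card V))
    (lam : ℝ) (hlam : 1 ≤ lam)
    (istar jstar : C)
    (h : s istar jstar ≤ lam / (1 + lam)) :
    ∑ v : V, dist (vloc v) (cloc jstar) ≤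
      (1 + 2*lam) * ∑ v : V, dist (vloc v) (cloc istar) := by
  classical
  set S : Finset V := Finset.univ.filter fun v => pref v istar jstar with hS
  set T : Finset V := Finset.univ.filter fun v => ¬ pref v istar jstar with hT
  have hTdist : ∀ v ∈ T, dist (vloc v) (cloc jstar) ≤ dist (vloc v) (cloc istar) := by
    intro v hv
    rw [hT, Finset.mem_filter] at hv
    by_contra hlt
    exact hv.2 (hconsist v istar jstar (by linarith [lt_of_not_ge hlt]))
  set D : ℝ := dist (cloc istar) (cloc jstar) with hD
  have hTD : ∀ v ∈ T, D ≤ 2 * dist (vloc v) (cloc istar) := by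
    intro v hv
    have := dist_triangle (cloc istar) (vloc v) (cloc jstar)
    have h2 := hTdist v hv
    rw [dist_comm (cloc istar) (vloc v)] at this
    linarith
  have hn : (0:ℝ) < Fintype.card V := by
    exact_mod_cast Fintype.card_pos
  have hcardsum : (S.card : ℝ) + T.card = Fintype.card V := by
    have := Finset.card_filter_add_card_filter_not
      (s := (Finset.univ : Finset V)) (p := fun v => pref v istar jstar)
    rw [Finset.card_univ] at this
    exact_mod_cast this
  have hlampos : (0:ℝ) < 1 + lam := by linarith
  have hSle : (S.card : ℝ) ≤ lam * T.card := by
    rw [hs] at h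
    have h1 : (S.card : ℝ) * (1 + lam) ≤ lam * Fintype.card V := by
      rw [div_le_div_iff₀ hn hlampos] at h
      linarith
    nlinarith
  have hTDsum : (T.card : ℝ) * D ≤ 2 * ∑ v ∈ T, dist (vloc v) (cloc istar) := by
    have := Finset.card_nsmul_le_sum T (fun v => dist (vloc v) (cloc istar)) (D/2)
      (fun v hv => by linarith [hTD v hv])
    have h2 : (T.card : ℝ) * (D/2) ≤ ∑ v ∈ T, dist (vloc v) (cloc istar) := by
      simpa [nsmul_eq_mul] using this
    linarith
  have hTsub : ∑ v ∈ T, dist (vloc v) (cloc istar) ≤ ∑ v : V, dist (vloc v) (cloc istar) :=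
    Finset.sum_le_sum_of_subset_of_nonneg (Finset.subset_univ T)
      (fun v _ _ => dist_nonneg)
  have hsplit : ∀ f : V → ℝ, ∑ v : V, f v = ∑ v ∈ T, f v + ∑ v ∈ S, f v := by
    intro f
    rw [hS, hT]
    rw [← Finset.sum_filter_add_sum_filter_not Finset.univ (fun v => pref v istar jstar) f]
    ring
  have hSsum : ∑ v ∈ S, dist (vloc v) (cloc jstar) ≤
      ∑ v ∈ S, dist (vloc v) (cloc istar) + S.card * D := by
    have : ∀ v ∈ S, dist (vloc v) (cloc jstar) ≤ dist (vloc v) (cloc istar) + D := by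
      intro v _
      have := dist_triangle (vloc v) (cloc istar) (cloc jstar)
      linarith
    calc ∑ v ∈ S, dist (vloc v) (cloc jstar)
        ≤ ∑ v ∈ S, (dist (vloc v) (cloc istar) + D) := Finset.sum_le_sum this
      _ = ∑ v ∈ S, dist (vloc v) (cloc istar) + S.card * D := by
          rw [Finset.sum_add_distrib, Finset.sum_const, nsmul_eq_mul]
  have hDnn : 0 ≤ D := dist_nonneg
  have key : (S.card : ℝ) * D ≤ 2 * lam * ∑ v : V, dist (vloc v) (cloc istar) := by
    have h1 : (S.card : ℝ) * D ≤ lam * T.card * D := by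
      nlinarith
    have h2 : lam * ((T.card : ℝ) * D) ≤ lam * (2 * ∑ v ∈ T, dist (vloc v) (cloc istar)) :=
      mul_le_mul_of_nonneg_left hTDsum (by linarith)
    nlinarith [mul_le_mul_of_nonneg_left hTsub (show (0:ℝ) ≤ 2*lam by linarith)]
  rw [hsplit (fun v => dist (vloc v) (cloc jstar)),
     hsplit (fun v => dist (vloc v) (cloc istar))] at *
  have hTineq : ∑ v ∈ T, dist (vloc v) (cloc jstar) ≤ ∑ v ∈ T, dist (vloc v) (cloc istar) :=
    Finset.sum_le_sum hTdist
  nlinarith [Finset.sum_nonneg (fun v (_ : v ∈ T) => dist_nonneg (x := vloc v) (y := cloc istar)),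
    Finset.sum_nonneg (fun v (_ : v ∈ S) => dist_nonneg (x := vloc v) (y := cloc istar))]
end

section
/- In the metric voting setting, suppose candidates j*, k, ℓ, i* (with k ≠ i*, ℓ ∉ {k, j*}) satisfy: s_{k≻i*} ≥ 1/λ, s_{k≻j*} ≤ λ·s_{ℓ≻k}, and s_{ℓ≻j*} ≤ λ·s_{j*≻k}, for some λ ≥ 1. Then for every partition C = I ⊔ J with i*, k ∈ I and j* ∈ J, we have min_{i∈I} s_{i≻j*} ≤ λ · max_{j∈J} max(s_{j≻i*}, s_{j≻k}). -/
/-- The case analysis of Corollary "local" (II): if candidates `j*, k, ℓ, i*`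
(with `k ≠ i*`, `ℓ ∉ {k, j*}`) satisfy `s_{k≻i*} ≥ 1/λ`, `s_{k≻j*} ≤ λ·s_{ℓ≻k}`,
and `s_{ℓ≻j*} ≤ λ·s_{j*≻k}` for some `λ ≥ 1`, then for every partition
`C = I ⊔ J` with `i*, k ∈ I` and `j* ∈ J`,
`min_{i∈I} s_{i≻j*} ≤ λ · max_{j∈J} max(s_{j≻i*}, s_{j≻k})`. -/
theorem stmt18 {V C : Type*} [Fintype V] [Nonempty V] [Fintype C] [DecidableEq C]
    (pref : V → C → C → Prop) [∀ v, DecidableRel (pref v)]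
    (htrans : ∀ v, Transitive (pref v))
    (hirr : ∀ v a b, pref v a b → ¬ pref v b a)
    (htotal : ∀ v (a b : C), a ≠ b → pref v a b ∨ pref v b a)
    (s : C → C → ℝ)
    (hs : ∀ a b, s a b =
      ((Finset.univ.filter fun v => pref v a b).card : ℝ) / (Fintype.card V))
    (lam : ℝ) (hlam : 1 ≤ lam)
    (jstar k l istar : C) (hki : k ≠ istar) (hlk : l ≠ k) (hlj : l ≠ jstar)
    (h1 : s k istar ≥ 1/lam)
    (h2 : s k jstar ≤ lam * s l k)
    (h3 : s l jstar ≤ lam * s jstar k)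
    (I J : Finset C) (hu : I ∪ J = Finset.univ) (hd : Disjoint I J)
    (hiI : istar ∈ I) (hkI : k ∈ I) (hjJ : jstar ∈ J) :
    (I.image fun i => s i jstar).min' (Finset.Nonempty.image ⟨istar, hiI⟩ _) ≤
      lam * (J.image fun j => max (s j istar) (s j k)).max'
        (Finset.Nonempty.image ⟨jstar, hjJ⟩ _) := by
  have hlam0 : (0:ℝ) ≤ lam := le_trans zero_le_one hlam
  have hlIJ : l ∈ I ∨ l ∈ J := by
    have : l ∈ I ∪ J := by rw [hu]; exact Finset.mem_univ l
    exact Finset.mem_union.mp this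
  rcases hlIJ with hlI | hlJ
  · -- min' ≤ s l jstar ≤ lam * s jstar k ≤ lam * max'
    have hmin : (I.image fun i => s i jstar).min' (Finset.Nonempty.image ⟨istar, hiI⟩ _)
        ≤ s l jstar :=
      Finset.min'_le _ _ (Finset.mem_image_of_mem _ hlI)
    have hmax : max (s jstar istar) (s jstar k) ≤
        (J.image fun j => max (s j istar) (s j k)).max'
          (Finset.Nonempty.image ⟨jstar, hjJ⟩ _) :=
      Finset.le_max' _ _ (Finset.mem_image_of_mem (fun j => max (s j istar) (s j k)) hjJ)
    calc (I.image fun i => s i jstar).min' (Finset.Nonempty.image ⟨istar, hiI⟩ _)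
        ≤ s l jstar := hmin
      _ ≤ lam * s jstar k := h3
      _ ≤ lam * ((J.image fun j => max (s j istar) (s j k)).max'
          (Finset.Nonempty.image ⟨jstar, hjJ⟩ _)) := by
          apply mul_le_mul_of_nonneg_left _ hlam0
          exact le_trans (le_max_right _ _) hmax
  · -- min' ≤ s k jstar ≤ lam * s l k ≤ lam * max'
    have hmin : (I.image fun i => s i jstar).min' (Finset.Nonempty.image ⟨istar, hiI⟩ _)
        ≤ s k jstar :=
      Finset.min'_le _ _ (Finset.mem_image_of_mem _ hkI)
    have hmax : max (s l istar) (s l k) ≤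
        (J.image fun j => max (s j istar) (s j k)).max'
          (Finset.Nonempty.image ⟨jstar, hjJ⟩ _) :=
      Finset.le_max' _ _ (Finset.mem_image_of_mem (fun j => max (s j istar) (s j k)) hlJ)
    calc (I.image fun i => s i jstar).min' (Finset.Nonempty.image ⟨istar, hiI⟩ _)
        ≤ s k jstar := hmin
      _ ≤ lam * s l k := h2
      _ ≤ lam * ((J.image fun j => max (s j istar) (s j k)).max'
          (Finset.Nonempty.image ⟨jstar, hjJ⟩ _)) := by
          apply mul_le_mul_of_nonneg_left _ hlam0
          exact le_trans (le_max_right _ _) hmax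
end
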